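/- Genus 2 commutation relation: with the same definitions, [L_4, L_6] = (2/5)(−5λ_{10} L_0 + 3λ₈ L_2 − 3λ₆ L_4 + 5λ₄ L_6). -/

import Mathlib

open MvPolynomial

/-- Variables: `X 0 = λ₄`, `X 1 = λ₆`, `X 2 = λ₈`, `X 3 = λ₁₀`. -/
noncomputable abbrev l4 : MvPolynomial (Fin 4) ℚ := X 0
noncomputable abbrev l6 : MvPolynomial (Fin 4) ℚ := X 1
noncomputable abbrev l8 : MvPolynomial (Fin 4) ℚ := X 2
noncomputable abbrev l10 : MvPolynomial (Fin 4) ℚ := X 3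

/-- The genus-2 matrix `T = (T_{2k+2,2s−2})`, rows and columns indexed by
`0,1,2,3 ↔ λ₄,λ₆,λ₈,λ₁₀`. -/
noncomputable def T2 : Matrix (Fin 4) (Fin 4) (MvPolynomial (Fin 4) ℚ) :=
  ![![4 * l4, 6 * l6, 8 * l8, 10 * l10],
    ![6 * l6, 8 * l8 - C (12/5 : ℚ) * l4 ^ 2, 10 * l10 - C (8/5 : ℚ) * l4 * l6,
      - (C (4/5 : ℚ) * l4 * l8)],
    ![8 * l8, 10 * l10 - C (8/5 : ℚ) * l4 * l6, 4 * l4 * l8 - C (12/5 : ℚ) * l6 ^ 2,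
      6 * l4 * l10 - C (6/5 : ℚ) * l6 * l8],
    ![10 * l10, - (C (4/5 : ℚ) * l4 * l8), 6 * l4 * l10 - C (6/5 : ℚ) * l6 * l8,
      4 * l6 * l10 - C (8/5 : ℚ) * l8 ^ 2]]

/-- The derivation `L_{2k} = Σ_s T_{2k+2,2s−2} ∂/∂λ_{2s}` of `ℚ[λ₄,λ₆,λ₈,λ₁₀]`;
`Lg2 k` is `L_{2k}`. -/
noncomputable def Lg2 (k : Fin 4) (p : MvPolynomial (Fin 4) ℚ) : MvPolynomial (Fin 4) ℚ :=
  ∑ j : Fin 4, T2 k j * pderiv j p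

/-! Both sides are derivations of `ℚ[λ₄,λ₆,λ₈,λ₁₀]` (a bracket of derivations is a derivation), so
it suffices to compare them on the generators, on which each `L_{2k}` returns an entry of `T`. The
theorem thus reduces to four polynomial identities between entries of `T`, one per generator. -/

theorem Derivation.map_ofNat {R A M : Type*} [CommSemiring R] [CommSemiring A] [AddCommMonoid M]
    [Algebra R A] [Module A M] [Module R M] (D : Derivation R A M) (n : ℕ) [n.AtLeastTwo] :
    D (no_index (OfNat.ofNat n : A)) = 0 :=
  D.map_natCast n

theorem Derivation.finset_sum_apply {R A M ι : Type*} [CommSemiring R] [CommSemiring A]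
    [AddCommMonoid M] [Algebra R A] [Module A M] [Module R M] (s : Finset ι)
    (D : ι → Derivation R A M) (a : A) :
    (∑ i ∈ s, D i) a = ∑ i ∈ s, D i a := by
  simp only [← Derivation.coeFnAddMonoidHom_apply, map_sum, Finset.sum_apply]

namespace MvPolynomial

theorem mkDerivation_apply_eq_sum_mul_pderiv {σ R : Type*} [CommSemiring R] [Fintype σ]
    [DecidableEq σ] (f : σ → MvPolynomial σ R) (p : MvPolynomial σ R) :
    mkDerivation R f p = ∑ i, f i * pderiv i p := by
  have : mkDerivation R f = ∑ i, f i • pderiv i :=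
    derivation_ext fun j => by
      simp [Derivation.finset_sum_apply, mkDerivation_X, pderiv_X, Pi.single_apply]
  simp [this, Derivation.finset_sum_apply]

theorem mkDerivation_lie_mkDerivation {σ R : Type*} [CommRing R] (f g : σ → MvPolynomial σ R) :
    ⁅mkDerivation R f, mkDerivation R g⁆
      = mkDerivation R (fun i => mkDerivation R f (g i) - mkDerivation R g (f i)) :=
  derivation_ext fun i => by simp [Derivation.commutator_apply, mkDerivation_X]

end MvPolynomial

open MvPolynomial

noncomputable abbrev genus2Derivation (k : Fin 4) :
    Derivation ℚ (MvPolynomial (Fin 4) ℚ) (MvPolynomial (Fin 4) ℚ) :=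
  mkDerivation ℚ (T2 k)

theorem Lg2_eq_genus2Derivation (k : Fin 4) (p : MvPolynomial (Fin 4) ℚ) :
    Lg2 k p = genus2Derivation k p :=
  (mkDerivation_apply_eq_sum_mul_pderiv _ _).symm

theorem genus2Derivation_two_T2_three_sub (i : Fin 4) :
    genus2Derivation 2 (T2 3 i) - genus2Derivation 3 (T2 2 i)
      = C (2/5 : ℚ) *
          (-(5 * l10 * T2 0 i) + 3 * l8 * T2 1 i - 3 * l6 * T2 2 i + 5 * l4 * T2 3 i) := by
  fin_cases i <;>
  · simp only [T2, Fin.isValue, Fin.zero_eta, Fin.mk_one, Fin.reduceFinMk, Matrix.cons_val',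
      Matrix.cons_val_zero, Matrix.cons_val_one, Matrix.cons_val, Matrix.cons_val_fin_one,
      map_sub, map_neg, Derivation.leibniz, Derivation.leibniz_pow, mkDerivation_X, derivation_C,
      Derivation.map_ofNat, smul_eq_mul, nsmul_eq_mul, mul_zero]
    -- `ring` cannot combine the constants `C q`, so compare values at every point of `ℚ⁴` instead.
    refine MvPolynomial.funext fun x => ?_
    simp only [map_zero, map_add, map_sub, map_neg, map_mul, map_pow, map_natCast, eval_X, eval_C,
      eval_ofNat]
    ring

theorem genus2Derivation_lie_two_three :
    ⁅genus2Derivation 2, genus2Derivation 3⁆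
      = (C (2/5) : MvPolynomial (Fin 4) ℚ) •
          (-(5 * l10) • genus2Derivation 0 + (3 * l8) • genus2Derivation 1
            - (3 * l6) • genus2Derivation 2 + (5 * l4) • genus2Derivation 3) := by
  rw [mkDerivation_lie_mkDerivation]
  refine derivation_ext fun i => ?_
  simp only [mkDerivation_X, genus2Derivation_two_T2_three_sub, Derivation.smul_apply,
    Derivation.add_apply, Derivation.sub_apply, smul_eq_mul]
  ring

/-- `[L₄, L₆] = (2/5)(−5λ₁₀ L₀ + 3λ₈ L₂ − 3λ₆ L₄ + 5λ₄ L₆)`. -/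
theorem genus2_bracket_L4_L6 (p : MvPolynomial (Fin 4) ℚ) :
    Lg2 2 (Lg2 3 p) - Lg2 3 (Lg2 2 p)
      = C (2/5 : ℚ) * (-(5 * l10 * Lg2 0 p) + 3 * l8 * Lg2 1 p
          - 3 * l6 * Lg2 2 p + 5 * l4 * Lg2 3 p) := by
  simp only [Lg2_eq_genus2Derivation, ← Derivation.commutator_apply, genus2Derivation_lie_two_three,
    Derivation.smul_apply, Derivation.add_apply, Derivation.sub_apply, smul_eq_mul]
  ring
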